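/- arXiv:1507.08785 — 12 statements merged into one kernel-verified Lean document; each statement's English description precedes it below -/
import Mathlib

section
/- Let 0 < α < π/2 and let a, b be real numbers with −1 < a < b < 1. Assume that for every t ∈ [a, b] both 1 − t² + t(t−a) − ((t−a)²/4)·sec²α > 0 and 1 − a² − a(t−a) − ((t−a)²/4)·sec²α > 0. Set δ = b − a. Then cos α · [ arcsin( ((δ/2)·sec α − b·cos α)/√(1 − b²·sin²α) ) + arcsin( b·cos α/√(1 − b²·sin²α) ) − arcsin( a·cos α/√(1 − a²·sin²α) ) + arcsin( ((δ/2)·sec α + a·cos α)/√(1 − a²·sin²α) ) ] − arcsin b + arcsin a > 0. (This quantity is the paper's time excess δT_a of the bang-bang detour over the equatorial singular arc joining two equatorial Bloch points with z-coordinates a and b on the same side of the xz-plane; its positivity proves Proposition 1 in the case r⁻_y·r⁺_y > 0.) -/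
open Real

/-!
Regard `δT_a` as a function of its right endpoint `x` (the paper's `b`), with `a` fixed. It vanishes
at `x = a`, and its derivative collapses to
`sin²α / (1 - x² sin²α) * ((2 - a x - x²) / (2 √Q) - √(1 - x²))`, where `Q` is the radicand shared
by the first and fourth arcsines. This is positive because
`(2 - a x - x²)² - 4 Q (1 - x²) = x² (x - a)² + (1 - x²) (x - a)² sec²α > 0`,
so `δT_a` is strictly increasing in `x` and hence positive for `x > a`.
-/

theorem HasDerivAt.arcsin_div_sqrt {u g : ℝ → ℝ} {u' g' x : ℝ} (hu : HasDerivAt u u' x)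
    (hg : HasDerivAt g g' x) (h : u x ^ 2 < g x) :
    HasDerivAt (fun y => arcsin (u y / √(g y)))
      ((u' * g x - u x * g' / 2) / (g x * √(g x - u x ^ 2))) x := by
  have hg0 : 0 < g x := (sq_nonneg _).trans_lt h
  have hsg : 0 < √(g x) := sqrt_pos.2 hg0
  have hgu : 0 < g x - u x ^ 2 := sub_pos.2 h
  have hlt : |u x / √(g x)| < 1 := by
    rw [abs_div, abs_of_pos hsg, div_lt_one hsg, ← sqrt_sq_eq_abs]
    exact sqrt_lt_sqrt (sq_nonneg _) h
  have hd := (hasDerivAt_arcsin (abs_lt.1 hlt).1.ne' (abs_lt.1 hlt).2.ne).comp x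
    (hu.div (hg.sqrt hg0.ne') hsg.ne')
  refine hd.congr_deriv ?_
  have hsq : √(1 - (u x / √(g x)) ^ 2) = √(g x - u x ^ 2) / √(g x) := by
    rw [← sqrt_div' _ hg0.le, div_pow, sq_sqrt hg0.le, one_sub_div hg0.ne']
  have := sqrt_pos.2 hgu
  rw [hsq]
  field_simp
  rw [sq_sqrt hg0.le]

namespace LandauZener

noncomputable def radicand (c a x : ℝ) : ℝ :=
  1 - a ^ 2 - a * (x - a) - ((x - a) ^ 2 / 4) * (1 / c) ^ 2

/-- `δT_a` with `c = cos α`, `s = sin α` and the endpoint `b` as the variable `x`. -/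
noncomputable def timeExcess (c s a x : ℝ) : ℝ :=
  c * (arcsin (((x - a) / 2 * (1 / c) - x * c) / √(1 - x ^ 2 * s ^ 2)) +
      arcsin (x * c / √(1 - x ^ 2 * s ^ 2)) -
      arcsin (a * c / √(1 - a ^ 2 * s ^ 2)) +
      arcsin (((x - a) / 2 * (1 / c) + a * c) / √(1 - a ^ 2 * s ^ 2))) -
    arcsin x + arcsin a

variable {c s a x : ℝ}

theorem timeExcess_self : timeExcess c s a a = 0 := by
  simp [timeExcess, neg_div, arcsin_neg]

variable (hc : c ≠ 0)
include hc

theorem two_mul_sqrt_radicand_mul_sqrt_lt (hxa : x ≠ a) (hx : x ^ 2 < 1)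
    (hQ : 0 < radicand c a x) :
    2 * √(radicand c a x) * √(1 - x ^ 2) < 2 - a * x - x ^ 2 := by
  have hW : 0 < 1 - x ^ 2 := sub_pos.2 hx
  have hQ' : 0 < 1 - a * x := by
    have : 0 ≤ ((x - a) ^ 2 / 4) * (1 / c) ^ 2 := by positivity
    unfold radicand at hQ; nlinarith
  have hgap : (2 - a * x - x ^ 2) ^ 2 - (2 * √(radicand c a x) * √(1 - x ^ 2)) ^ 2 =
      (x * (x - a)) ^ 2 + (1 - x ^ 2) * (x - a) ^ 2 * (1 / c) ^ 2 := by
    rw [mul_pow, mul_pow, sq_sqrt hQ.le, sq_sqrt hW.le, radicand]; ring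
  have : 0 < (1 - x ^ 2) * (x - a) ^ 2 * (1 / c) ^ 2 := by
    have := sub_ne_zero.2 hxa
    positivity
  refine lt_of_pow_lt_pow_left₀ 2 (by linarith) ?_
  nlinarith [sq_nonneg (x * (x - a))]

variable (hcs : c ^ 2 + s ^ 2 = 1)
include hcs

theorem sub_sq_eq_radicand_left :
    1 - x ^ 2 * s ^ 2 - ((x - a) / 2 * (1 / c) - x * c) ^ 2 = radicand c a x := by
  rw [radicand, show s ^ 2 = 1 - c ^ 2 by linarith]; field_simp; ring

theorem sub_sq_eq_radicand_right :
    1 - a ^ 2 * s ^ 2 - ((x - a) / 2 * (1 / c) + a * c) ^ 2 = radicand c a x := by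
  rw [radicand, show s ^ 2 = 1 - c ^ 2 by linarith]; field_simp; ring

theorem hasDerivAt_timeExcess (hx : x ^ 2 < 1) (hQ : 0 < radicand c a x) :
    HasDerivAt (timeExcess c s a)
      (s ^ 2 / (1 - x ^ 2 * s ^ 2) *
        ((2 - a * x - x ^ 2) / (2 * √(radicand c a x)) - √(1 - x ^ 2))) x := by
  have hg : HasDerivAt (fun y => 1 - y ^ 2 * s ^ 2) (-(2 * x * s ^ 2)) x := by
    simpa using ((hasDerivAt_pow 2 x).mul_const (s ^ 2)).const_sub 1
  have hid : HasDerivAt (fun y : ℝ => (y - a) / 2 * (1 / c)) (1 / 2 * (1 / c)) x := by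
    simpa using (((hasDerivAt_id x).sub_const a).div_const 2).mul_const (1 / c)
  have hxc : HasDerivAt (fun y : ℝ => y * c) c x := by
    simpa using (hasDerivAt_id x).mul_const c
  have hu : HasDerivAt (fun y : ℝ => (y - a) / 2 * (1 / c) - y * c) (1 / 2 * (1 / c) - c) x :=
    hid.sub hxc
  have hlt1 : ((x - a) / 2 * (1 / c) - x * c) ^ 2 < 1 - x ^ 2 * s ^ 2 := by
    rw [← sub_pos, sub_sq_eq_radicand_left hc hcs]; exact hQ
  have hlt4 : ((x - a) / 2 * (1 / c) + a * c) ^ 2 < 1 - a ^ 2 * s ^ 2 := by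
    rw [← sub_pos, sub_sq_eq_radicand_right hc hcs]; exact hQ
  -- indexed by the arcsines of `timeExcess`; the third one is constant
  have h1 := hu.arcsin_div_sqrt hg hlt1
  have h2 := hxc.arcsin_div_sqrt hg (by nlinarith)
  have h4 := (hid.add_const (a * c)).arcsin_div_sqrt (hasDerivAt_const x (1 - a ^ 2 * s ^ 2)) hlt4
  rw [sub_sq_eq_radicand_left hc hcs] at h1
  rw [sub_sq_eq_radicand_right hc hcs] at h4
  rw [show 1 - x ^ 2 * s ^ 2 - (x * c) ^ 2 = 1 - x ^ 2 by linear_combination -x ^ 2 * hcs] at h2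
  refine ((((h1.add h2).sub_const _).add h4).const_mul c |>.sub (hasDerivAt_arcsin ?_ ?_)
    |>.add_const (arcsin a)).congr_deriv ?_
  · nlinarith
  · nlinarith
  · have hg0 := (sq_nonneg _).trans_lt hlt1
    have hA0 := (sq_nonneg _).trans_lt hlt4
    have hP := sqrt_pos.2 hQ
    have hW := sqrt_pos.2 (sub_pos.2 hx)
    have hW2 := sq_sqrt (sub_pos.2 hx).le
    have hs2 : s ^ 2 = 1 - c ^ 2 := by linarith
    have e4 : c * ((1 / 2 * (1 / c) * (1 - a ^ 2 * s ^ 2) -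
          ((x - a) / 2 * (1 / c) + a * c) * 0 / 2) / ((1 - a ^ 2 * s ^ 2) * √(radicand c a x))) =
        1 / (2 * √(radicand c a x)) := by
      field_simp
      ring
    have e1 : c * (((1 / 2 * (1 / c) - c) * (1 - x ^ 2 * s ^ 2) -
          ((x - a) / 2 * (1 / c) - x * c) * -(2 * x * s ^ 2) / 2) /
          ((1 - x ^ 2 * s ^ 2) * √(radicand c a x))) + 1 / (2 * √(radicand c a x)) =
        s ^ 2 / (1 - x ^ 2 * s ^ 2) * ((2 - a * x - x ^ 2) / (2 * √(radicand c a x))) := by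
      rw [hs2] at hg0 ⊢
      field_simp
      ring
    have e2 : c * ((c * (1 - x ^ 2 * s ^ 2) - x * c * -(2 * x * s ^ 2) / 2) /
          ((1 - x ^ 2 * s ^ 2) * √(1 - x ^ 2))) - 1 / √(1 - x ^ 2) =
        -(s ^ 2 * √(1 - x ^ 2) / (1 - x ^ 2 * s ^ 2)) := by
      rw [hs2] at hg0 ⊢
      field_simp
      linear_combination (1 - c ^ 2) * hW2
    linear_combination e1 + e2 + e4

theorem strictMonoOn_timeExcess {b : ℝ} (hs : s ≠ 0) (ha : -1 < a) (hb : b < 1)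
    (hQ : ∀ x ∈ Set.Icc a b, 0 < radicand c a x) :
    StrictMonoOn (timeExcess c s a) (Set.Icc a b) := by
  have hderiv : ∀ x ∈ Set.Icc a b, HasDerivAt (timeExcess c s a)
      (s ^ 2 / (1 - x ^ 2 * s ^ 2) *
        ((2 - a * x - x ^ 2) / (2 * √(radicand c a x)) - √(1 - x ^ 2))) x := fun x hx =>
    hasDerivAt_timeExcess hc hcs (by nlinarith [hx.1, hx.2]) (hQ x hx)
  refine strictMonoOn_of_deriv_pos (convex_Icc a b)
    (fun x hx => (hderiv x hx).continuousAt.continuousWithinAt) fun x hx => ?_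
  rw [interior_Icc] at hx
  have hx1 : x ^ 2 < 1 := by nlinarith [hx.1, hx.2]
  have hg : 0 < 1 - x ^ 2 * s ^ 2 := by nlinarith
  have hP : 0 < √(radicand c a x) := sqrt_pos.2 (hQ x (Set.Ioo_subset_Icc_self hx))
  rw [(hderiv x (Set.Ioo_subset_Icc_self hx)).deriv]
  refine mul_pos (by positivity) (sub_pos.2 ((lt_div_iff₀ (by positivity)).2 ?_))
  linarith [two_mul_sqrt_radicand_mul_sqrt_lt hc hx.1.ne' hx1 (hQ x (Set.Ioo_subset_Icc_self hx))]

end LandauZener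

theorem deltaTa_pos_general (α a b : ℝ) (hα₀ : 0 < α) (hα₁ : α < π / 2)
    (ha : -1 < a) (hab : a < b) (hb : b < 1)
    (hpos₂ : ∀ t ∈ Set.Icc a b,
      1 - a ^ 2 - a * (t - a) - ((t - a) ^ 2 / 4) * (1 / cos α) ^ 2 > 0)
    (δ : ℝ) (hδ : δ = b - a) :
    cos α *
        (arcsin ((δ / 2 * (1 / cos α) - b * cos α) / Real.sqrt (1 - b ^ 2 * sin α ^ 2)) +
          arcsin (b * cos α / Real.sqrt (1 - b ^ 2 * sin α ^ 2)) -
          arcsin (a * cos α / Real.sqrt (1 - a ^ 2 * sin α ^ 2)) +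
          arcsin ((δ / 2 * (1 / cos α) + a * cos α) / Real.sqrt (1 - a ^ 2 * sin α ^ 2))) -
      arcsin b + arcsin a > 0 := by
  subst hδ
  have hc : cos α ≠ 0 := (cos_pos_of_mem_Ioo ⟨by linarith, hα₁⟩).ne'
  have hs : sin α ≠ 0 := (sin_pos_of_pos_of_lt_pi hα₀ (by linarith [pi_pos])).ne'
  have hmono := LandauZener.strictMonoOn_timeExcess hc (cos_sq_add_sin_sq α) hs ha hb hpos₂
  have := hmono (Set.left_mem_Icc.2 hab.le) (Set.right_mem_Icc.2 hab.le) hab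
  rwa [LandauZener.timeExcess_self] at this

/-- Positivity of the time excess `δT_a` of the bang-bang detour over the equatorial
singular arc (Proposition 1, case `r⁻_y · r⁺_y > 0`). -/
theorem deltaTa_pos (α a b : ℝ) (hα₀ : 0 < α) (hα₁ : α < π / 2)
    (ha : -1 < a) (hab : a < b) (hb : b < 1)
    (hpos₁ : ∀ t ∈ Set.Icc a b,
      1 - t ^ 2 + t * (t - a) - ((t - a) ^ 2 / 4) * (1 / cos α) ^ 2 > 0)
    (hpos₂ : ∀ t ∈ Set.Icc a b,
      1 - a ^ 2 - a * (t - a) - ((t - a) ^ 2 / 4) * (1 / cos α) ^ 2 > 0)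
    (δ : ℝ) (hδ : δ = b - a) :
    cos α *
        (arcsin ((δ / 2 * (1 / cos α) - b * cos α) / Real.sqrt (1 - b ^ 2 * sin α ^ 2)) +
          arcsin (b * cos α / Real.sqrt (1 - b ^ 2 * sin α ^ 2)) -
          arcsin (a * cos α / Real.sqrt (1 - a ^ 2 * sin α ^ 2)) +
          arcsin ((δ / 2 * (1 / cos α) + a * cos α) / Real.sqrt (1 - a ^ 2 * sin α ^ 2))) -
      arcsin b + arcsin a > 0 :=
  deltaTa_pos_general α a b hα₀ hα₁ ha hab hb hpos₂ δ hδ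
end

section
/- For every real α with 0 < α < π/2 and every real r with −1 ≤ r < 1, one has cos α · arccos( r·cos α / √(1 − r²·sin²α) ) < arccos r. (This is the positivity of the paper's time difference δT_b, proving Proposition 1 in the case r⁻_y·r⁺_y < 0: the equatorial singular arc is strictly slower than the bang-singular detour.) -/
/-!
Writing `c = cos α`, `s = sin α`, the function `δT_b` vanishes at `r = 1` (its `arccos` argument
is then `c / √(c²) = 1`), and its derivative on `(-1, 1)` simplifies, using `s² + c² = 1`, to
`-s² √(1 - r²) / (1 - r² s²) < 0`. Hence `δT_b` is strictly decreasing on `[-1, 1]`, so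
`δT_b r > δT_b 1 = 0` for `r < 1`.
-/

open Real

noncomputable def bangArg (c s x : ℝ) : ℝ := x * c / √(1 - x ^ 2 * s ^ 2)

/-- `deltaTb (cos α) (sin α)` is the paper's `δT_b`. -/
noncomputable def deltaTb (c s x : ℝ) : ℝ := arccos x - c * arccos (bangArg c s x)

section
variable {c s x : ℝ}

lemma one_sub_sq_mul_sq_pos (hs : s ^ 2 < 1) (hx : x ∈ Set.Icc (-1 : ℝ) 1) :
    0 < 1 - x ^ 2 * s ^ 2 := by
  have : x ^ 2 ≤ 1 := by nlinarith [hx.1, hx.2]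
  nlinarith [mul_le_mul_of_nonneg_right this (sq_nonneg s)]

lemma one_sub_bangArg_sq (hcs : s ^ 2 + c ^ 2 = 1) (hD : 0 < 1 - x ^ 2 * s ^ 2) :
    1 - bangArg c s x ^ 2 = (1 - x ^ 2) / (1 - x ^ 2 * s ^ 2) := by
  rw [bangArg, div_pow, sq_sqrt hD.le, eq_div_iff hD.ne', sub_mul, div_mul_cancel₀ _ hD.ne']
  linear_combination (-x ^ 2) * hcs

lemma bangArg_one (hcs : s ^ 2 + c ^ 2 = 1) (hc : 0 < c) : bangArg c s 1 = 1 := by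
  rw [bangArg, show (1 : ℝ) - 1 ^ 2 * s ^ 2 = c ^ 2 by linear_combination -hcs, sqrt_sq hc.le,
    one_mul, div_self hc.ne']

lemma deltaTb_one (hcs : s ^ 2 + c ^ 2 = 1) (hc : 0 < c) : deltaTb c s 1 = 0 := by
  simp [deltaTb, bangArg_one hcs hc]

lemma continuousOn_deltaTb (hs : s ^ 2 < 1) : ContinuousOn (deltaTb c s) (Set.Icc (-1) 1) := by
  refine continuous_arccos.continuousOn.sub (continuousOn_const.mul ?_)
  refine continuous_arccos.comp_continuousOn (ContinuousOn.div (by fun_prop) (by fun_prop) ?_)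
  exact fun x hx ↦ (sqrt_pos.2 (one_sub_sq_mul_sq_pos hs hx)).ne'

lemma hasDerivAt_bangArg (hD : 0 < 1 - x ^ 2 * s ^ 2) :
    HasDerivAt (bangArg c s) (c / ((1 - x ^ 2 * s ^ 2) * √(1 - x ^ 2 * s ^ 2))) x := by
  have hroot : HasDerivAt (fun t ↦ √(1 - t ^ 2 * s ^ 2))
      (-(2 * x * s ^ 2) / (2 * √(1 - x ^ 2 * s ^ 2))) x :=
    (((hasDerivAt_pow 2 x).mul_const (s ^ 2)).const_sub 1).sqrt hD.ne' |>.congr_deriv (by ring)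
  have hq := (hasDerivAt_mul_const c).div hroot (sqrt_pos.2 hD).ne'
  refine hq.congr_deriv ?_
  have hR := sq_sqrt hD.le
  set R := √(1 - x ^ 2 * s ^ 2)
  have : R ≠ 0 := (sqrt_pos.2 hD).ne'
  field_simp
  linear_combination -(c * x ^ 2 * s ^ 2) * hR

lemma hasDerivAt_arccos_bangArg (hcs : s ^ 2 + c ^ 2 = 1) (hs : s ^ 2 < 1)
    (hx : x ∈ Set.Ioo (-1 : ℝ) 1) :
    HasDerivAt (fun t ↦ arccos (bangArg c s t))
      (-(c / ((1 - x ^ 2 * s ^ 2) * √(1 - x ^ 2)))) x := by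
  have hD := one_sub_sq_mul_sq_pos hs (Set.Ioo_subset_Icc_self hx)
  have hx2 : 0 < 1 - x ^ 2 := by nlinarith [hx.1, hx.2]
  have hφ : bangArg c s x ^ 2 < 1 := by nlinarith [div_pos hx2 hD, one_sub_bangArg_sq hcs hD]
  have hφ₁ : bangArg c s x ≠ 1 := by nlinarith
  have hφ₂ : bangArg c s x ≠ -1 := by nlinarith
  refine ((hasDerivAt_arccos hφ₂ hφ₁).comp x (hasDerivAt_bangArg hD)).congr_deriv ?_
  rw [one_sub_bangArg_sq hcs hD, sqrt_div hx2.le]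
  have := (sqrt_pos.2 hD).ne'
  have := (sqrt_pos.2 hx2).ne'
  field_simp

lemma hasDerivAt_deltaTb (hcs : s ^ 2 + c ^ 2 = 1) (hs : s ^ 2 < 1)
    (hx : x ∈ Set.Ioo (-1 : ℝ) 1) :
    HasDerivAt (deltaTb c s) (-(s ^ 2 * √(1 - x ^ 2) / (1 - x ^ 2 * s ^ 2))) x := by
  have hD := one_sub_sq_mul_sq_pos hs (Set.Ioo_subset_Icc_self hx)
  have hx2 : 0 < 1 - x ^ 2 := by nlinarith [hx.1, hx.2]
  refine ((hasDerivAt_arccos hx.1.ne' hx.2.ne).sub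
    ((hasDerivAt_arccos_bangArg hcs hs hx).const_mul c)).congr_deriv ?_
  have hR := sq_sqrt hx2.le
  set R := √(1 - x ^ 2)
  have : R ≠ 0 := (sqrt_pos.2 hx2).ne'
  field_simp
  linear_combination s ^ 2 * hR + hcs

lemma strictAntiOn_deltaTb (hcs : s ^ 2 + c ^ 2 = 1) (hs₀ : s ≠ 0) (hs : s ^ 2 < 1) :
    StrictAntiOn (deltaTb c s) (Set.Icc (-1) 1) := by
  refine strictAntiOn_of_deriv_neg (convex_Icc _ _) (continuousOn_deltaTb hs) fun x hx ↦ ?_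
  rw [interior_Icc] at hx
  have hx2 : 0 < 1 - x ^ 2 := by nlinarith [hx.1, hx.2]
  have hD := one_sub_sq_mul_sq_pos hs (Set.Ioo_subset_Icc_self hx)
  rw [(hasDerivAt_deltaTb hcs hs hx).deriv, neg_lt_zero]
  positivity

end

/-- Positivity of the time difference `δT_b` (Proposition 1, case `r⁻_y · r⁺_y < 0`):
the equatorial singular arc is strictly slower than the bang-singular detour. -/
theorem deltaTb_pos (α r : ℝ) (hα₀ : 0 < α) (hα₁ : α < π / 2)
    (hr₀ : -1 ≤ r) (hr₁ : r < 1) :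
    cos α * arccos (r * cos α / Real.sqrt (1 - r ^ 2 * sin α ^ 2)) < arccos r := by
  have hc : 0 < cos α := cos_pos_of_mem_Ioo ⟨by linarith, hα₁⟩
  have hs₀ : sin α ≠ 0 := (sin_pos_of_pos_of_lt_pi hα₀ (by linarith)).ne'
  have hcs : sin α ^ 2 + cos α ^ 2 = 1 := sin_sq_add_cos_sq α
  have hs : sin α ^ 2 < 1 := by nlinarith
  have hlt := strictAntiOn_deltaTb hcs hs₀ hs ⟨hr₀, hr₁.le⟩ ⟨by norm_num, le_rfl⟩ hr₁
  rw [deltaTb_one hcs hc, deltaTb, bangArg] at hlt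
  linarith
end

section
/- Fix α with 0 < α < π/2. For every r ∈ (−1, 1), the function g(r) = arccos r − cos α · arccos( r·cos α / √(1 − r²·sin²α) ) is differentiable at r with derivative g′(r) = − 2·√(1 − r²)·sin²α / ( r²·cos(2α) − r² + 2 ), and this derivative is strictly negative. -/
/-!
Write `s = sin α`, `c = cos α` and `D = 1 - r²s²`. The inner quotient `h(r) = r c / √D` has
derivative `c / D^{3/2}`, and `1 - h² = (1 - r²) / D` because `s² + c² = 1`; so the chain rule gives
`(c · arccos ∘ h)' = -c² / (√(1 - r²) D)`. Adding `arccos' r = -1 / √(1 - r²)` and using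
`c² - D = -s² (1 - r²)` leaves `-√(1 - r²) s² / D`, which is the claimed value since the paper's
denominator `r² cos 2α - r² + 2` is `2D`. It is negative because `sin α ≠ 0`.
-/

open Real

section ArccosQuotient

variable {s c r : ℝ}

theorem hasDerivAt_mul_div_sqrt_one_sub_sq_mul (hr : 0 < 1 - r ^ 2 * s ^ 2) :
    HasDerivAt (fun x : ℝ => x * c / √(1 - x ^ 2 * s ^ 2))
      (c / (1 - r ^ 2 * s ^ 2) / √(1 - r ^ 2 * s ^ 2)) r := by
  have hD : 0 < √(1 - r ^ 2 * s ^ 2) := sqrt_pos.mpr hr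
  have hinner : HasDerivAt (fun x : ℝ => 1 - x ^ 2 * s ^ 2) (-(2 * r * s ^ 2)) r := by
    simpa using ((hasDerivAt_pow 2 r).mul_const (s ^ 2)).const_sub 1
  refine (((hasDerivAt_id' r).mul_const c).div (hinner.sqrt hr.ne') hD.ne').congr_deriv ?_
  field_simp
  rw [sq_sqrt hr.le]
  ring

theorem one_sub_sq_mul_div_sqrt (hsc : s ^ 2 + c ^ 2 = 1) (hr : r ^ 2 < 1) :
    1 - (r * c / √(1 - r ^ 2 * s ^ 2)) ^ 2 = (1 - r ^ 2) / (1 - r ^ 2 * s ^ 2) := by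
  have hD : 0 < 1 - r ^ 2 * s ^ 2 := by nlinarith
  rw [div_pow, sq_sqrt hD.le]
  field_simp
  linear_combination (-r ^ 2) * hsc

theorem hasDerivAt_arccos_mul_div_sqrt (hsc : s ^ 2 + c ^ 2 = 1) (hr : r ^ 2 < 1) :
    HasDerivAt (fun x : ℝ => arccos (x * c / √(1 - x ^ 2 * s ^ 2)))
      (-(c / (√(1 - r ^ 2) * (1 - r ^ 2 * s ^ 2)))) r := by
  have hD : 0 < 1 - r ^ 2 * s ^ 2 := by nlinarith
  have hE : 0 < 1 - r ^ 2 := by linarith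
  have hgap := one_sub_sq_mul_div_sqrt hsc hr
  have hbound : |r * c / √(1 - r ^ 2 * s ^ 2)| < 1 := by
    rw [← sq_lt_one_iff_abs_lt_one]
    have : 0 < (1 - r ^ 2) / (1 - r ^ 2 * s ^ 2) := by positivity
    linarith
  obtain ⟨hgt, hlt⟩ := abs_lt.mp hbound
  refine ((hasDerivAt_arccos hgt.ne' hlt.ne).comp r
    (hasDerivAt_mul_div_sqrt_one_sub_sq_mul hD)).congr_deriv ?_
  rw [hgap, sqrt_div' _ hD.le]
  have := sqrt_pos.mpr hD
  have := sqrt_pos.mpr hE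
  field_simp

theorem hasDerivAt_arccos_sub_mul_arccos_mul_div_sqrt (hsc : s ^ 2 + c ^ 2 = 1)
    (hr : r ^ 2 < 1) :
    HasDerivAt (fun x : ℝ => arccos x - c * arccos (x * c / √(1 - x ^ 2 * s ^ 2)))
      (-(√(1 - r ^ 2) * s ^ 2 / (1 - r ^ 2 * s ^ 2))) r := by
  have hD : 0 < 1 - r ^ 2 * s ^ 2 := by nlinarith
  have hE : 0 < 1 - r ^ 2 := by linarith
  have habs : |r| < 1 := (sq_lt_one_iff_abs_lt_one r).mp hr
  refine ((hasDerivAt_arccos (abs_lt.mp habs).1.ne' (abs_lt.mp habs).2.ne).sub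
    ((hasDerivAt_arccos_mul_div_sqrt hsc hr).const_mul c)).congr_deriv ?_
  have := sqrt_pos.mpr hE
  field_simp
  rw [sq_sqrt hE.le]
  linear_combination hsc

end ArccosQuotient

theorem sq_mul_cos_two_mul_sub_sq_add_two (α r : ℝ) :
    r ^ 2 * cos (2 * α) - r ^ 2 + 2 = 2 * (1 - r ^ 2 * sin α ^ 2) := by
  rw [cos_two_mul]
  linear_combination 2 * r ^ 2 * cos_sq_add_sin_sq α

/-- The time difference `δT_b(r)` is differentiable on `(-1, 1)` with the explicit
strictly negative derivative given in the paper. -/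
theorem deltaTb_hasDerivAt (α : ℝ) (hα₀ : 0 < α) (hα₁ : α < π / 2)
    (r : ℝ) (hr : r ∈ Set.Ioo (-1 : ℝ) 1) :
    HasDerivAt
      (fun r : ℝ => arccos r - cos α * arccos (r * cos α / Real.sqrt (1 - r ^ 2 * sin α ^ 2)))
      (-(2 * Real.sqrt (1 - r ^ 2) * sin α ^ 2 / (r ^ 2 * cos (2 * α) - r ^ 2 + 2))) r ∧
    -(2 * Real.sqrt (1 - r ^ 2) * sin α ^ 2 / (r ^ 2 * cos (2 * α) - r ^ 2 + 2)) < 0 := by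
  have hr2 : r ^ 2 < 1 := (sq_lt_one_iff_abs_lt_one r).mpr (abs_lt.mpr hr)
  have hs : 0 < sin α := sin_pos_of_pos_of_lt_pi hα₀ (by linarith [pi_pos])
  have hD : 0 < 1 - r ^ 2 * sin α ^ 2 := by nlinarith [sin_sq_add_cos_sq α]
  have hE : 0 < √(1 - r ^ 2) := sqrt_pos.mpr (by linarith)
  have hvalue : 2 * √(1 - r ^ 2) * sin α ^ 2 / (r ^ 2 * cos (2 * α) - r ^ 2 + 2) =
      √(1 - r ^ 2) * sin α ^ 2 / (1 - r ^ 2 * sin α ^ 2) := by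
    rw [sq_mul_cos_two_mul_sub_sq_add_two, mul_assoc, mul_div_mul_left _ _ two_ne_zero]
  rw [hvalue]
  exact ⟨hasDerivAt_arccos_sub_mul_arccos_mul_div_sqrt (sin_sq_add_cos_sq α) hr2,
    neg_neg_of_pos (div_pos (mul_pos hE (pow_pos hs 2)) hD)⟩
end

section
/- Let c₁, c₂, u, τ be real numbers and set ω = √(1 + u²). Let U = Matrix.exp( −(τ·I) • (σx + u·σz) ) (a 2×2 complex matrix). Then Tr( U * (c₁·σx + c₂·σy) * Uᴴ * σz ) = (2/(1+u²)) · ( c₂·ω·sin(2τω) + u·c₁·(1 − cos(2τω)) ), where the right-hand side is a real number coerced to ℂ. -/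
open Matrix

noncomputable section

/-- Pauli matrix σx. -/
def σx : Matrix (Fin 2) (Fin 2) ℂ := !![0, 1; 1, 0]

/-- Pauli matrix σy. -/
def σy : Matrix (Fin 2) (Fin 2) ℂ := !![0, -Complex.I; Complex.I, 0]

/-- Pauli matrix σz. -/
def σz : Matrix (Fin 2) (Fin 2) ℂ := !![1, 0; 0, -1]

/-!
`H = σx + u σz` squares to `ω² = 1 + u²`, so the even and odd parts of the exponential
series sum to `U = cos (τω) - i (sin (τω) / ω) H`. Since `H` is Hermitian,
`Uᴴ = cos (τω) + i (sin (τω) / ω) H`, the trace becomes a polynomial in `cos (τω)` and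
`sin (τω) / ω`, and the double-angle formulas with `ω² = 1 + u²` bring it to the stated form.
-/

open NormedSpace

section ExpOfSqEqScalar

variable {𝔸 : Type*} [Ring 𝔸] [Algebra ℂ 𝔸] [TopologicalSpace 𝔸] [IsTopologicalRing 𝔸]
  [ContinuousSMul ℂ 𝔸] [T2Space 𝔸]

theorem exp_smul_of_sq_eq_one {N : 𝔸} (hN : N ^ 2 = 1) (z : ℂ) :
    exp (z • N) = Complex.cosh z • 1 + Complex.sinh z • N := by
  rw [exp_eq_tsum ℂ]
  refine HasSum.tsum_eq (HasSum.even_add_odd ?_ ?_)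
  · convert (Complex.hasSum_cosh z).smul_const (1 : 𝔸) using 2 with n
    rw [smul_pow, pow_mul N, hN, one_pow, smul_smul, div_eq_inv_mul]
  · convert (Complex.hasSum_sinh z).smul_const N using 2 with n
    rw [smul_pow, pow_succ N, pow_mul N, hN, one_pow, one_mul, smul_smul, div_eq_inv_mul]

theorem exp_mul_I_smul_of_sq_eq_smul_one {H : 𝔸} {ω : ℝ} (hω : ω ≠ 0)
    (hH : H ^ 2 = ((ω : ℂ) ^ 2) • 1) (t : ℝ) :
    exp ((t * Complex.I) • H) =
      (Real.cos (t * ω) : ℂ) • 1 + (Complex.I * (Real.sin (t * ω) / ω : ℝ)) • H := by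
  have hω' : (ω : ℂ) ≠ 0 := by exact_mod_cast hω
  have hN : ((ω : ℂ)⁻¹ • H) ^ 2 = 1 := by
    rw [smul_pow, hH, smul_smul, inv_pow, inv_mul_cancel₀ (pow_ne_zero 2 hω'), one_smul]
  have hsmul : (t * Complex.I) • H = ((t * ω : ℝ) * Complex.I : ℂ) • ((ω : ℂ)⁻¹ • H) := by
    rw [smul_smul]; congr 1; push_cast; field_simp
  rw [hsmul, exp_smul_of_sq_eq_one hN, Complex.cosh_mul_I, Complex.sinh_mul_I, smul_smul,
    Complex.ofReal_cos, Complex.ofReal_div, Complex.ofReal_sin]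
  congr 2
  ring

end ExpOfSqEqScalar

lemma σx_add_smul_σz_sq (u : ℂ) : (σx + u • σz) ^ 2 = (1 + u ^ 2) • 1 := by
  ext i j
  fin_cases i <;> fin_cases j <;> simp [σx, σz, sq, mul_apply, Fin.sum_univ_two, add_comm]

lemma isHermitian_σx_add_smul_σz (u : ℝ) : (σx + (u : ℂ) • σz).IsHermitian := by
  ext i j
  fin_cases i <;> fin_cases j <;> simp [σx, σz]

lemma trace_mul_mul_conjTranspose_mul_σz (c s u c₁ c₂ : ℝ) (U : Matrix (Fin 2) (Fin 2) ℂ)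
    (hU : U = (c : ℂ) • 1 + (Complex.I * s) • (σx + (u : ℂ) • σz)) :
    trace (U * ((c₁ : ℂ) • σx + (c₂ : ℂ) • σy) * Uᴴ * σz) =
      ((4 * u * c₁ * s ^ 2 - 4 * c₂ * c * s : ℝ) : ℂ) := by
  rw [hU, conjTranspose_add, conjTranspose_smul, conjTranspose_smul, conjTranspose_one,
    (isHermitian_σx_add_smul_σz u).eq]
  simp only [trace, Complex.coe_smul, σx, σz, smul_of, smul_cons, smul_eq_mul, mul_one, mul_zero,
    smul_empty, mul_neg, of_add_of, add_cons, head_cons, zero_add, tail_cons, add_zero,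
    empty_add_empty, σy, RCLike.star_def, Complex.conj_ofReal, star_mul', Complex.conj_I, neg_mul,
    neg_smul, neg_of, neg_cons, neg_empty, neg_neg, diag_apply, mul_apply, Matrix.add_apply,
    Matrix.smul_apply, one_apply, smul_ite, Complex.real_smul, smul_zero, of_apply, cons_val',
    cons_val_fin_one, Fin.sum_univ_two, Fin.isValue, cons_val_zero, cons_val_one, ↓reduceIte,
    one_ne_zero, zero_ne_one, neg_add_rev, Complex.ofReal_sub, Complex.ofReal_mul,
    Complex.ofReal_ofNat, Complex.ofReal_pow]
  linear_combination (4 * s * c₂ * c - 4 * s ^ 2 * c₁ * u : ℂ) * Complex.I_sq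

/-- The switching function of the PMP along a bang arc of the Landau–Zener system:
explicit value of `Tr(U (c₁σx + c₂σy) Uᴴ σz)` for the propagator `U` of a bang arc with
constant control `u` over time `τ`. -/
theorem switching_function_along_bang_arc (c₁ c₂ u τ : ℝ) (ω : ℝ)
    (hω : ω = Real.sqrt (1 + u ^ 2))
    (U : Matrix (Fin 2) (Fin 2) ℂ)
    (hU : U = NormedSpace.exp ((-(τ : ℂ) * Complex.I) • (σx + (u : ℂ) • σz))) :
    Matrix.trace (U * ((c₁ : ℂ) • σx + (c₂ : ℂ) • σy) * Uᴴ * σz) =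
      ((2 / (1 + u ^ 2) *
        (c₂ * ω * Real.sin (2 * τ * ω) + u * c₁ * (1 - Real.cos (2 * τ * ω))) : ℝ) : ℂ) := by
  have hω0 : ω ≠ 0 := by rw [hω]; positivity
  have hωsq : ω ^ 2 = 1 + u ^ 2 := by rw [hω, Real.sq_sqrt]; positivity
  have hH : (σx + (u : ℂ) • σz) ^ 2 = ((ω : ℂ) ^ 2) • 1 := by
    rw [σx_add_smul_σz_sq]
    congr 1
    exact_mod_cast hωsq.symm
  rw [show -(τ : ℂ) * Complex.I = ((-τ : ℝ) : ℂ) * Complex.I by push_cast; rfl,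
    exp_mul_I_smul_of_sq_eq_smul_one hω0 hH] at hU
  rw [trace_mul_mul_conjTranspose_mul_σz _ _ u c₁ c₂ U hU, Complex.ofReal_inj, neg_mul,
    Real.cos_neg, Real.sin_neg, mul_assoc 2 τ ω, Real.sin_two_mul, Real.cos_two_mul, Real.cos_sq', ← hωsq]
  field_simp
  ring

end
end

section
/- Let c₁, c₂, u, τ be real numbers with ω = √(1 + u²), and suppose sin(τω) ≠ 0 and cos(τω) ≠ 0. Let U = Matrix.exp( −(τ·I) • (σx + u·σz) ). Then Tr( U * (c₁·σx + c₂·σy) * Uᴴ * σz ) = 0 if and only if c₂·√(1+u²) = −c₁·u·tan(τ·√(1+u²)). (This is the junction condition determining the duration of an interior bang arc of an extremal.) -/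
open Matrix

noncomputable section

/-! With `H = σx + u σz` one has `H² = ω²`, so `J = -iH/ω` squares to `-1` and the real algebra
map `ℂ → M₂(ℂ)` sending `i` to `J` carries `exp(iτω)` to `U = cos(τω) - i sin(τω) H / ω`.
For `U` of this shape, `Tr(U (c₁σx + c₂σy) Uᴴ σz) = 4 a (c₂ c + c₁ u a)` with `c = cos(τω)` and
`a = sin(τω)/ω`; since `a ≠ 0` it vanishes iff `c₂ ω c = -c₁ u sin(τω)`, and dividing by `c`
gives the tangent form. -/

open Complex NormedSpace

section
variable {A : Type*} [NormedRing A] [NormedAlgebra ℂ A] [Algebra ℚ A]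

theorem exp_ofReal_smul_of_mul_self_eq_neg_one {J : A} (hJ : J * J = -1) (θ : ℝ) :
    exp ((θ : ℂ) • J) = (Real.cos θ : ℂ) • 1 + (Real.sin θ : ℂ) • J := by
  let f := Complex.liftAux J hJ
  have key := map_exp f f.toLinearMap.continuous_of_finiteDimensional (θ * I)
  rw [← Complex.exp_eq_exp_ℂ] at key
  simp only [f, liftAux_apply, Algebra.algebraMap_eq_smul_one, exp_ofReal_mul_I_re,
    exp_ofReal_mul_I_im, re_ofReal_mul, im_ofReal_mul, I_re, I_im, mul_zero, mul_one, zero_smul,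
    zero_add] at key
  simpa only [coe_smul] using key.symm

theorem exp_neg_I_smul_of_mul_self_eq {H : A} {ω : ℝ} (hω : ω ≠ 0)
    (hH : H * H = ((ω ^ 2 : ℝ) : ℂ) • 1) (t : ℝ) :
    exp ((-(t : ℂ) * I) • H) =
      (Real.cos (t * ω) : ℂ) • 1 - (I * (Real.sin (t * ω) / ω : ℝ)) • H := by
  have hω' : (ω : ℂ) ≠ 0 := ofReal_ne_zero.2 hω
  set J := (-I / ω) • H
  have hJ : J * J = -1 := by
    rw [smul_mul_smul, hH, smul_smul, ← neg_one_smul ℂ (1 : A)]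
    congr 1
    push_cast
    field_simp
    exact I_sq
  have hsmul : (-(t : ℂ) * I) • H = ((t * ω : ℝ) : ℂ) • J := by
    rw [smul_smul]
    congr 1
    push_cast
    field_simp
  rw [hsmul, exp_ofReal_smul_of_mul_self_eq_neg_one hJ, smul_smul, sub_eq_add_neg, ← neg_smul]
  congr 2
  push_cast
  ring

end

theorem σx_add_smul_σz_mul_self (u : ℝ) :
    (σx + (u : ℂ) • σz) * (σx + (u : ℂ) • σz) = ((1 + u ^ 2 : ℝ) : ℂ) • 1 := by
  ext i j
  fin_cases i <;> fin_cases j <;> simp [σx, σz, Matrix.mul_apply, Fin.sum_univ_two] <;> ring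

theorem trace_conj_mul_σz (c a u c₁ c₂ : ℝ) :
    trace (((c : ℂ) • 1 - (I * a) • (σx + (u : ℂ) • σz)) * ((c₁ : ℂ) • σx + (c₂ : ℂ) • σy) *
      ((c : ℂ) • 1 - (I * a) • (σx + (u : ℂ) • σz))ᴴ * σz) =
      ((4 * a * (c₂ * c + c₁ * u * a) : ℝ) : ℂ) := by
  simp [Matrix.trace, Fin.sum_univ_two, Matrix.mul_apply, σx, σy, σz, conjTranspose_apply,
    Complex.ext_iff]
  constructor <;> ring

-- Any norm inducing the entrywise topology will do: `exp` depends only on the topology.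
attribute [local instance] Matrix.linftyOpNormedRing Matrix.linftyOpNormedAlgebra

/-- The junction condition determining the duration of an interior bang arc of an
extremal: the switching function vanishes at the end of the arc iff
`c₂·√(1+u²) = −c₁·u·tan(τ·√(1+u²))`. -/
theorem junction_condition (c₁ c₂ u τ : ℝ) (ω : ℝ) (hω : ω = Real.sqrt (1 + u ^ 2))
    (hsin : Real.sin (τ * ω) ≠ 0) (hcos : Real.cos (τ * ω) ≠ 0)
    (U : Matrix (Fin 2) (Fin 2) ℂ)
    (hU : U = NormedSpace.exp ((-(τ : ℂ) * Complex.I) • (σx + (u : ℂ) • σz))) :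
    Matrix.trace (U * ((c₁ : ℂ) • σx + (c₂ : ℂ) • σy) * Uᴴ * σz) = 0 ↔
      c₂ * Real.sqrt (1 + u ^ 2) = -(c₁ * u * Real.tan (τ * Real.sqrt (1 + u ^ 2))) := by
  have hω_pos : 0 < ω := hω ▸ Real.sqrt_pos.2 (by positivity)
  have hH : (σx + (u : ℂ) • σz) * (σx + (u : ℂ) • σz) = ((ω ^ 2 : ℝ) : ℂ) • 1 := by
    rw [hω, Real.sq_sqrt (by positivity)]
    exact σx_add_smul_σz_mul_self u
  have hexp : NormedSpace.exp ((-(τ : ℂ) * I) • (σx + (u : ℂ) • σz)) =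
      (Real.cos (τ * ω) : ℂ) • 1 - (I * (Real.sin (τ * ω) / ω : ℝ)) • (σx + (u : ℂ) • σz) :=
    exp_neg_I_smul_of_mul_self_eq hω_pos.ne' hH τ
  rw [hU, hexp, trace_conj_mul_σz, ofReal_eq_zero, ← hω,
    Real.tan_eq_sin_div_cos, mul_eq_zero, or_iff_right (mul_ne_zero four_ne_zero (div_ne_zero hsin hω_pos.ne'))]
  generalize Real.sin (τ * ω) = s at hsin ⊢
  generalize Real.cos (τ * ω) = c at hcos ⊢
  constructor <;> intro h <;> field_simp at h ⊢ <;> linarith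

end
end

section
/- Let u > 0 and θ ∈ ℝ. Set w = √(1+u²), C = √( (u² + cos²(θ/2)) / (1+u²) ), S = sin(θ/2)/w, Cx = cos(θ/2)/C, and Sx = u·sin(θ/2)/(w·C). Then C² + S² = 1, Cx² + Sx² = 1, and in the real quaternions ℍ the identity ⟨cos(θ/2), sin(θ/2)/w, 0, u·sin(θ/2)/w⟩ = ⟨C, S·Cx, S·Sx, 0⟩ * ⟨Cx, 0, 0, Sx⟩ holds. (Equivalently: the rotation of ℝ³ by angle θ about the unit axis (cos α, 0, sin α), α = arctan u, is the composition of the rotation by angle η about the unit axis (Cx, Sx, 0) lying in the xy-plane with a rotation about the z-axis, where sin(η/2) = sin(θ/2)·cos α and cos(η/2) = √((u²+cos²(θ/2))/(1+u²)).) -/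
open Real

/-! The target quaternion `⟨a, b, 0, d⟩` has no `j`-part, and `⟨r, b p, b q, 0⟩ * ⟨p, 0, 0, q⟩`
equals `⟨r p, b (p² + q²), 0, r q⟩`. So it factors as soon as `(p, q)` is the unit vector of
`(a, d)` and `r = √(a² + d²)`; for `a = cos (θ/2)`, `d = u sin (θ/2) / w` this is exactly the
`C` of the statement, and `C² + S² = 1` is the unit norm of the rotation quaternion. -/

theorem Quaternion.mk_mul_mk_eq_of_sq_add_sq_eq_one {R : Type*} [CommRing R]
    (r b p q : R) (hpq : p ^ 2 + q ^ 2 = 1) :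
    (⟨r, b * p, b * q, 0⟩ : Quaternion R) * ⟨p, 0, 0, q⟩ = ⟨r * p, b, 0, r * q⟩ := by
  rw [QuaternionAlgebra.mk_mul_mk]
  ext <;> dsimp only
  · ring
  · linear_combination b * hpq
  · ring
  · ring

theorem div_sq_add_div_sq_eq_one {K : Type*} [Field K] {r a d : K} (hr : r ≠ 0)
    (h : r ^ 2 = a ^ 2 + d ^ 2) : (a / r) ^ 2 + (d / r) ^ 2 = 1 := by
  rw [div_pow, div_pow, ← add_div, ← h, div_self (pow_ne_zero 2 hr)]

/-- Quaternion decomposition of a bang-arc rotation of the Bloch sphere: the rotation by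
angle `θ` about the tilted unit axis `(cos α, 0, sin α)` (with `α = arctan u`) factors as the
rotation by angle `η` about an axis in the `xy`-plane followed by a rotation about the
`z`-axis (proof of Proposition 6). -/
theorem bang_rotation_decomposition (u θ : ℝ) (hu : 0 < u)
    (w C S Cx Sx : ℝ)
    (hw : w = Real.sqrt (1 + u ^ 2))
    (hC : C = Real.sqrt ((u ^ 2 + Real.cos (θ / 2) ^ 2) / (1 + u ^ 2)))
    (hS : S = Real.sin (θ / 2) / w)
    (hCx : Cx = Real.cos (θ / 2) / C)
    (hSx : Sx = u * Real.sin (θ / 2) / (w * C)) :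
    C ^ 2 + S ^ 2 = 1 ∧ Cx ^ 2 + Sx ^ 2 = 1 ∧
      (⟨Real.cos (θ / 2), Real.sin (θ / 2) / w, 0, u * Real.sin (θ / 2) / w⟩ : Quaternion ℝ) =
        (⟨C, S * Cx, S * Sx, 0⟩ : Quaternion ℝ) * (⟨Cx, 0, 0, Sx⟩ : Quaternion ℝ) := by
  have hw2 : w ^ 2 = 1 + u ^ 2 := hw ▸ sq_sqrt (by positivity)
  have hw0 : w ≠ 0 := by rintro rfl; nlinarith
  have hC0 : C ≠ 0 := hC ▸ (sqrt_pos.mpr (by positivity)).ne'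
  have hC2 : C ^ 2 = cos (θ / 2) ^ 2 + (u * sin (θ / 2) / w) ^ 2 := by
    rw [hC, sq_sqrt (by positivity), div_pow, hw2]
    field_simp
    linear_combination -u ^ 2 * sin_sq_add_cos_sq (θ / 2)
  have hSx' : Sx = u * sin (θ / 2) / w / C := by rw [hSx, div_div]
  have hunit : Cx ^ 2 + Sx ^ 2 = 1 := hCx ▸ hSx' ▸ div_sq_add_div_sq_eq_one hC0 hC2
  refine ⟨?_, hunit, ?_⟩
  · rw [hC2, hS]
    field_simp
    linear_combination (1 + u ^ 2) * sin_sq_add_cos_sq (θ / 2) + (cos (θ / 2) ^ 2 - 1) * hw2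
  · rw [Quaternion.mk_mul_mk_eq_of_sq_add_sq_eq_one C S Cx Sx hunit, hCx, hSx', hS,
      mul_div_cancel₀ _ hC0, mul_div_cancel₀ _ hC0]
end

section
/- Let 0 < α < π/2 and let R be a linear isometry of EuclideanSpace ℝ (Fin 3) fixing the vector m = (cos α, 0, sin α), i.e. R m = m. Let a = (c₁, c₂, 0) with c₁, c₂ real, and suppose the third coordinate of R a is 0 and R a ≠ a. Then R a = (c₁, −c₂, 0). -/
/-!
A linear isometry fixing `m` preserves both `⟪·, m⟫` and the norm. Since `m` has no `y`-component
and `cos α ≠ 0`, the first invariant forces `R a` to have the same `x`-coordinate as `a`; the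
norm then fixes its `y`-coordinate up to sign, and the sign `+` would give `R a = a`.
-/

open Real RealInnerProductSpace

theorem LinearIsometry.inner_map_left_of_map_eq {𝕜 E : Type*} [RCLike 𝕜] [SeminormedAddCommGroup E]
    [InnerProductSpace 𝕜 E] (R : E →ₗᵢ[𝕜] E) {m : E} (hm : R m = m) (x : E) :
    inner 𝕜 (R x) m = inner 𝕜 x m := by
  rw [← R.inner_map_map x m, hm]

namespace EuclideanSpace

theorem real_inner_fin_three (x y : EuclideanSpace ℝ (Fin 3)) :
    ⟪x, y⟫ = x 0 * y 0 + x 1 * y 1 + x 2 * y 2 := by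
  simp [PiLp.inner_apply, Fin.sum_univ_three, mul_comm]

theorem real_norm_sq_fin_three (x : EuclideanSpace ℝ (Fin 3)) :
    ‖x‖ ^ 2 = x 0 ^ 2 + x 1 ^ 2 + x 2 ^ 2 := by
  simp [real_norm_sq_eq, Fin.sum_univ_three]

theorem eq_and_eq_or_eq_neg_of_inner_eq_of_norm_eq {a b m : EuclideanSpace ℝ (Fin 3)}
    (hm₀ : m 0 ≠ 0) (hm₁ : m 1 = 0) (ha : a 2 = 0) (hb : b 2 = 0)
    (hinner : ⟪b, m⟫ = ⟪a, m⟫) (hnorm : ‖b‖ = ‖a‖) :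
    b 0 = a 0 ∧ (b 1 = a 1 ∨ b 1 = -a 1) := by
  rw [real_inner_fin_three, real_inner_fin_three, hm₁, ha, hb] at hinner
  have hnorm_sq := congrArg (· ^ 2) hnorm
  simp only [real_norm_sq_fin_three, ha, hb] at hnorm_sq
  have h₀ : b 0 = a 0 := mul_right_cancel₀ hm₀ (by linarith)
  refine ⟨h₀, sq_eq_sq_iff_eq_or_eq_neg.mp ?_⟩
  rw [h₀] at hnorm_sq
  linarith

end EuclideanSpace

/-- Relation between consecutive corner points of an extremal: a linear isometry of `ℝ³`
fixing the tilted axis `m = (cos α, 0, sin α)` which maps `a = (c₁, c₂, 0)` to a different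
vector whose third coordinate vanishes must map it to `(c₁, −c₂, 0)`. -/
theorem corner_point_reflection (α : ℝ) (hα₀ : 0 < α) (hα₁ : α < π / 2)
    (R : EuclideanSpace ℝ (Fin 3) →ₗᵢ[ℝ] EuclideanSpace ℝ (Fin 3))
    (m : EuclideanSpace ℝ (Fin 3)) (hm : m = ![Real.cos α, 0, Real.sin α])
    (hRm : R m = m)
    (c₁ c₂ : ℝ) (a : EuclideanSpace ℝ (Fin 3)) (ha : a = ![c₁, c₂, 0])
    (hz : R a 2 = 0) (hne : R a ≠ a) :
    R a = ![c₁, -c₂, 0] := by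
  have hcos : Real.cos α ≠ 0 := (cos_pos_of_mem_Ioo ⟨by linarith, hα₁⟩).ne'
  have hm₀ : m 0 ≠ 0 := by simpa [hm] using hcos
  have hm₁ : m 1 = 0 := by simp [hm]
  have ha₂ : a 2 = 0 := by simp [ha]
  obtain ⟨hx, hy | hy⟩ := EuclideanSpace.eq_and_eq_or_eq_neg_of_inner_eq_of_norm_eq hm₀ hm₁ ha₂ hz
    (R.inner_map_left_of_map_eq hRm a) (R.norm_map a)
  · refine absurd (PiLp.ext fun i => ?_) hne
    fin_cases i
    exacts [hx, hy, hz.trans ha₂.symm]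
  · funext i
    fin_cases i <;> simp [hx, hy, hz, ha]
end

section
/- Let E be a real inner product space, let f : E → E be a linear isometry, and let n ∈ E be a nonzero vector with f n = n. Then for all nonzero vectors v, e ∈ E, |angle(f v, e) − angle(v, e)| ≤ 2 · angle(n, e), where angle denotes the (undirected) angle between nonzero vectors, with values in [0, π]. (In particular, a Bloch-sphere rotation about the axis (1,0,±u)/√(1+u²) changes the angle between a state vector and the x-axis by at most 2·arctan u, and the angle to the z-axis by at most π − 2·arctan u.) -/
/-! Since `f` fixes `n`, the vectors `f v` and `v` make the same angle with `n`; two applications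
of the triangle inequality for angles, each passing through `n`, then bound the angles to `e`. -/

open InnerProductGeometry

section

variable {V : Type*} [NormedAddCommGroup V] [InnerProductSpace ℝ V]

lemma angle_le_angle_add_two_mul_angle_of_angle_eq {x y n : V} (h : angle x n = angle y n)
    (e : V) : angle x e ≤ angle y e + 2 * angle n e :=
  calc angle x e ≤ angle x n + angle n e := angle_le_angle_add_angle x n e
    _ = angle y n + angle n e := by rw [h]
    _ ≤ angle y e + angle e n + angle n e := by gcongr; exact angle_le_angle_add_angle y e n
    _ = angle y e + 2 * angle n e := by rw [angle_comm e n]; ring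

lemma abs_angle_sub_angle_le_two_mul_angle_of_angle_eq {x y n : V} (h : angle x n = angle y n)
    (e : V) : |angle x e - angle y e| ≤ 2 * angle n e := by
  rw [abs_sub_le_iff]
  constructor
  · linarith [angle_le_angle_add_two_mul_angle_of_angle_eq h e]
  · linarith [angle_le_angle_add_two_mul_angle_of_angle_eq h.symm e]

end

theorem angle_change_bound_general {E : Type*} [NormedAddCommGroup E] [InnerProductSpace ℝ E]
    (f : E →ₗᵢ[ℝ] E) (n : E) (hfn : f n = n) :
    ∀ v e : E, v ≠ 0 → e ≠ 0 →
      |InnerProductGeometry.angle (f v) e - InnerProductGeometry.angle v e| ≤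
        2 * InnerProductGeometry.angle n e := by
  intro v e _ _
  have hvn : angle (f v) n = angle v n := by
    rw [← f.angle_map v n, hfn]
  exact abs_angle_sub_angle_le_two_mul_angle_of_angle_eq hvn e

/-- A linear isometry fixing a nonzero vector `n` changes the (undirected) angle of any
nonzero vector to any nonzero reference direction `e` by at most `2·angle n e`
(the bound `Δθ^max` of Fig. 7, underlying Proposition 12). -/
theorem angle_change_bound {E : Type*} [NormedAddCommGroup E] [InnerProductSpace ℝ E]
    (f : E →ₗᵢ[ℝ] E) (n : E) (hn : n ≠ 0) (hfn : f n = n) :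
    ∀ v e : E, v ≠ 0 → e ≠ 0 →
      |InnerProductGeometry.angle (f v) e - InnerProductGeometry.angle v e| ≤
        2 * InnerProductGeometry.angle n e :=
  angle_change_bound_general f n hfn
end

section
/- Let u > 0 and θ ∈ ℝ, and set η = 2·arctan( |sin(θ/2)| / √(u² + cos²(θ/2)) ). Then η ≤ π − 2·arctan u, and consequently (π + η)/(π − η) + 1 = 2π/(π − η) ≤ π/arctan u. (This is the bound underlying Proposition 8: a locally optimal type I extremal of the Landau–Zener time-optimal control problem has at most π/α switchings, α = arctan u_max.) -/
open Real

/-- The angular step `η` between consecutive corner points of a type I extremal satisfies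
`η ≤ π − 2·arctan u`, whence `(π+η)/(π−η) + 1 = 2π/(π−η) ≤ π/arctan u` (Proposition 8). -/
theorem switching_number_bound (u θ : ℝ) (hu : 0 < u)
    (η : ℝ)
    (hη : η = 2 * arctan (|Real.sin (θ / 2)| / Real.sqrt (u ^ 2 + Real.cos (θ / 2) ^ 2))) :
    η ≤ π - 2 * arctan u ∧
      (π + η) / (π - η) + 1 = 2 * π / (π - η) ∧
      2 * π / (π - η) ≤ π / arctan u := by
  have hden : 0 < Real.sqrt (u ^ 2 + Real.cos (θ / 2) ^ 2) := by
    apply Real.sqrt_pos.mpr; positivity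
  have hsq : Real.sqrt (u ^ 2 + Real.cos (θ / 2) ^ 2) ^ 2
      = u ^ 2 + Real.cos (θ / 2) ^ 2 := by
    apply Real.sq_sqrt; positivity
  have hle : |Real.sin (θ / 2)| / Real.sqrt (u ^ 2 + Real.cos (θ / 2) ^ 2) ≤ u⁻¹ := by
    rw [inv_eq_one_div, div_le_div_iff₀ hden hu]
    have h3 : u * |Real.sin (θ / 2)| ≤ Real.sqrt (u ^ 2 + Real.cos (θ / 2) ^ 2) := by
      have h4 : 0 ≤ u * |Real.sin (θ / 2)| := by positivity
      nlinarith [sq_abs (Real.sin (θ / 2)), Real.sin_sq_add_cos_sq (θ / 2)]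
    nlinarith [h3]
  have haru : 0 < arctan u := by rw [← Real.arctan_zero]; exact Real.arctan_strictMono hu
  have key : arctan (|Real.sin (θ / 2)| / Real.sqrt (u ^ 2 + Real.cos (θ / 2) ^ 2))
      ≤ π / 2 - arctan u := by
    rw [← Real.arctan_inv_of_pos hu]
    exact Real.arctan_strictMono.monotone hle
  have h1 : η ≤ π - 2 * arctan u := by rw [hη]; linarith
  have hη0 : 0 ≤ η := by
    rw [hη]
    have : 0 ≤ arctan (|Real.sin (θ / 2)| / Real.sqrt (u ^ 2 + Real.cos (θ / 2) ^ 2)) :=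
      by rw [← Real.arctan_zero]; exact Real.arctan_strictMono.monotone (by positivity)
    linarith
  have hpos : 0 < π - η := by linarith
  refine ⟨h1, ?_, ?_⟩
  · field_simp; ring
  · rw [div_le_div_iff₀ hpos haru]
    nlinarith [Real.pi_pos]
end

section
/- For every real α with 0 < α < π/2 and every real x with 0 < x < sin α, one has cos α · arcsin( x / sin α ) < arcsin( x·cos α / (sin α · √(1 − x²)) ). (Equivalently, the paper's function δτ̂(x, 0) = cos α·arcsin(x·csc α) − arcsin(x·cot α/√(1−x²)) is strictly negative: free evolution between two symmetric points at height x is slower than the pair of bang arcs through their antipodal equatorial junction, proving Lemma 1 of the paper in the case r′_z = 0.) -/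
/-!
Put `c = cos α` and `θ = arcsin (x / sin α) ∈ (0, π/2)`. Since `x = sin α · sin θ` and
`sin² α + cos² α = 1`, the right-hand side is `arctan (c · tan θ)`, so the claim is
`tan (c θ) < c · tan θ` for `0 < c < 1`: strict convexity of `tan` on `[0, π/2)`, which
vanishes at `0`.
-/

open Real Set

theorem strictConvexOn_tan : StrictConvexOn ℝ (Ico 0 (π / 2)) tan := by
  refine StrictMonoOn.strictConvexOn_of_deriv (convex_Ico 0 (π / 2))
    (continuousOn_tan_Ioo.mono fun y hy => ⟨by linarith [pi_pos, hy.1], hy.2⟩) ?_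
  rw [interior_Ico]
  intro a ha b hb hab
  have hcos : cos b < cos a :=
    cos_lt_cos_of_nonneg_of_le_pi_div_two ha.1.le hb.2.le hab
  have hb₀ : 0 < cos b := cos_pos_of_mem_Ioo ⟨by linarith [pi_pos, hb.1], hb.2⟩
  simp only [deriv_tan]
  gcongr

theorem tan_mul_lt_mul_tan {c θ : ℝ} (hc₀ : 0 < c) (hc₁ : c < 1) (hθ₀ : 0 < θ)
    (hθ₁ : θ < π / 2) : tan (c * θ) < c * tan θ := by
  have h := strictConvexOn_tan.2 ⟨hθ₀.le, hθ₁⟩ ⟨le_rfl, by positivity⟩ hθ₀.ne' hc₀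
    (sub_pos.2 hc₁) (add_sub_cancel c 1)
  simpa using h

theorem mul_lt_arctan_mul_tan {c θ : ℝ} (hc₀ : 0 < c) (hc₁ : c < 1) (hθ₀ : 0 < θ)
    (hθ₁ : θ < π / 2) : c * θ < arctan (c * tan θ) := by
  have hcθ : c * θ < θ := mul_lt_of_lt_one_left hθ₀ hc₁
  calc c * θ = arctan (tan (c * θ)) :=
        (arctan_tan (by nlinarith [pi_pos]) (hcθ.trans hθ₁)).symm
    _ < arctan (c * tan θ) := arctan_strictMono (tan_mul_lt_mul_tan hc₀ hc₁ hθ₀ hθ₁)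

theorem arctan_mul_tan_arcsin_div {s c x : ℝ} (hsc : s ^ 2 + c ^ 2 = 1)
    (hx : x ^ 2 < s ^ 2) :
    arctan (c * tan (arcsin (x / s))) = arcsin (x * c / (s * √(1 - x ^ 2))) := by
  rw [arctan_eq_arcsin, tan_arcsin]
  congr 1
  have hs : s ≠ 0 := by rintro rfl; nlinarith [sq_nonneg x]
  have hcos_sq : 0 < 1 - (x / s) ^ 2 := by
    rw [div_pow, sub_pos, div_lt_one (by positivity)]; exact hx
  have hsx : s ^ 2 - x ^ 2 ≠ 0 := (sub_pos.2 hx).ne'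
  have key :
      1 + (c * (x / s / √(1 - (x / s) ^ 2))) ^ 2 = (1 - x ^ 2) / (1 - (x / s) ^ 2) := by
    rw [mul_pow, div_pow _ (√_), sq_sqrt hcos_sq.le]
    field_simp
    linear_combination (x ^ 2) * hsc
  rw [key, sqrt_div' _ hcos_sq.le]
  have hr : √(1 - (x / s) ^ 2) ≠ 0 := (sqrt_pos.2 hcos_sq).ne'
  generalize √(1 - (x / s) ^ 2) = r at hr ⊢
  field_simp

/-- Lemma 1 of the paper in the case `r′_z = 0`: free evolution between two symmetric
points at height `x` is slower than the pair of bang arcs through their antipodal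
equatorial junction, i.e. `δτ̂(x,0) < 0`. -/
theorem free_evolution_slower (α x : ℝ) (hα₀ : 0 < α) (hα₁ : α < π / 2)
    (hx₀ : 0 < x) (hx₁ : x < Real.sin α) :
    Real.cos α * arcsin (x / Real.sin α) <
      arcsin (x * Real.cos α / (Real.sin α * Real.sqrt (1 - x ^ 2))) := by
  have hs : 0 < sin α := sin_pos_of_pos_of_lt_pi hα₀ (by linarith [pi_pos])
  have hc₀ : 0 < cos α := cos_pos_of_mem_Ioo ⟨by linarith [pi_pos], hα₁⟩
  have hc₁ : cos α < 1 := by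
    simpa using cos_lt_cos_of_nonneg_of_le_pi_div_two le_rfl hα₁.le hα₀
  have hθ₀ : 0 < arcsin (x / sin α) := arcsin_pos.2 (div_pos hx₀ hs)
  have hθ₁ : arcsin (x / sin α) < π / 2 := arcsin_lt_pi_div_two.2 ((div_lt_one hs).2 hx₁)
  rw [← arctan_mul_tan_arcsin_div (sin_sq_add_cos_sq α) (by nlinarith)]
  exact mul_lt_arctan_mul_tan hc₀ hc₁ hθ₀ hθ₁
end

section
/- Fix α with 0 < α < π/2. For every x ∈ (0, sin α), the function G(x) = cos α · arcsin(x/sin α) − arcsin( x·cos α/(sin α·√(1 − x²)) ) is differentiable at x with derivative G′(x) = − ( x² · sin(2α) · √(1 − x²/sin²α) ) / ( (x² − 1) · (cos(2α) + 2x² − 1) ), and this derivative is strictly negative. -/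
/-!
Write `s = sin α`, `c = cos α`. Both terms of `G` are arcsines, and since `c² + s² = 1` their
derivatives simplify to `c / √(s² - x²)` and `c / ((1 - x²) √(s² - x²))`. The difference is
`-c x² / ((1 - x²) √(s² - x²))`, which is the stated formula once
`cos 2α + 2x² - 1 = -2 (s² - x²)` and `sin 2α = 2 s c`; it is negative because `c > 0`.
-/

open Real

lemma HasDerivAt.arcsin_of_sq_lt_one {f : ℝ → ℝ} {f' x : ℝ} (hf : HasDerivAt f f' x)
    (h : f x ^ 2 < 1) :
    HasDerivAt (fun y => arcsin (f y)) (f' / √(1 - f x ^ 2)) x := by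
  obtain ⟨h₁, h₂⟩ := abs_lt.1 ((sq_lt_one_iff_abs_lt_one _).1 h)
  exact ((Real.hasDerivAt_arcsin h₁.ne' h₂.ne).comp x hf).congr_deriv (by ring)

section

variable {s c x : ℝ}

lemma sqrt_one_sub_div_sq (hs : 0 < s) :
    √(1 - (x / s) ^ 2) = √(s ^ 2 - x ^ 2) / s := by
  rw [show 1 - (x / s) ^ 2 = (s ^ 2 - x ^ 2) / s ^ 2 by field_simp,
    Real.sqrt_div' _ (sq_nonneg s), Real.sqrt_sq hs.le]

lemma hasDerivAt_arcsin_div_const (hs : 0 < s) (hx : x ^ 2 < s ^ 2) :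
    HasDerivAt (fun y => arcsin (y / s)) (1 / √(s ^ 2 - x ^ 2)) x := by
  have hxs : (x / s) ^ 2 < 1 := by rwa [div_pow, div_lt_one (by positivity)]
  have hr : 0 < √(s ^ 2 - x ^ 2) := Real.sqrt_pos.2 (by linarith)
  refine (((hasDerivAt_id' x).div_const s).arcsin_of_sq_lt_one hxs).congr_deriv ?_
  rw [sqrt_one_sub_div_sq hs]
  field_simp

lemma hasDerivAt_mul_div_mul_sqrt_one_sub_sq (hs : s ≠ 0) (hx : x ^ 2 < 1) :
    HasDerivAt (fun y => y * c / (s * √(1 - y ^ 2)))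
      (c / (s * (1 - x ^ 2) * √(1 - x ^ 2))) x := by
  have ht : 0 < √(1 - x ^ 2) := Real.sqrt_pos.2 (by linarith)
  have ht2 : √(1 - x ^ 2) ^ 2 = 1 - x ^ 2 := Real.sq_sqrt (by linarith)
  have hsqrt : HasDerivAt (fun y => √(1 - y ^ 2)) (-(2 * x) / (2 * √(1 - x ^ 2))) x := by
    simpa using ((hasDerivAt_pow 2 x).const_sub 1).sqrt (by linarith)
  refine (((hasDerivAt_id' x).mul_const c).div (hsqrt.const_mul s)
    (mul_ne_zero hs ht.ne')).congr_deriv ?_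
  have hx1 : 1 - x ^ 2 ≠ 0 := by linarith
  field_simp
  rw [ht2]
  field_simp
  ring

/-- On `x² < s²` the argument of the arcsine lies in `(-1, 1)` exactly because `c² + s² = 1`:
`1 - (x c / (s √(1 - x²)))² = (s² - x²) / (s² (1 - x²))`. -/
lemma hasDerivAt_arcsin_mul_div_mul_sqrt_one_sub_sq (hcs : c ^ 2 + s ^ 2 = 1) (hs : 0 < s)
    (hx : x ^ 2 < s ^ 2) :
    HasDerivAt (fun y => arcsin (y * c / (s * √(1 - y ^ 2))))
      (c / ((1 - x ^ 2) * √(s ^ 2 - x ^ 2))) x := by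
  have ht : 0 < √(1 - x ^ 2) := Real.sqrt_pos.2 (by nlinarith)
  have ht2 : √(1 - x ^ 2) ^ 2 = 1 - x ^ 2 := Real.sq_sqrt (by nlinarith)
  have hr : 0 < √(s ^ 2 - x ^ 2) := Real.sqrt_pos.2 (by linarith)
  have hst : 0 < s * √(1 - x ^ 2) := mul_pos hs ht
  have hsq : 1 - (x * c / (s * √(1 - x ^ 2))) ^ 2 =
      (s ^ 2 - x ^ 2) / (s * √(1 - x ^ 2)) ^ 2 := by
    field_simp
    nlinarith
  have harg : (x * c / (s * √(1 - x ^ 2))) ^ 2 < 1 := by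
    have : 0 < (s ^ 2 - x ^ 2) / (s * √(1 - x ^ 2)) ^ 2 := div_pos (by linarith) (by positivity)
    linarith
  refine ((hasDerivAt_mul_div_mul_sqrt_one_sub_sq hs.ne' (by nlinarith)).arcsin_of_sq_lt_one
    harg).congr_deriv ?_
  rw [hsq, Real.sqrt_div' _ (sq_nonneg _), Real.sqrt_sq hst.le, ← ht2]
  field_simp

lemma hasDerivAt_mul_arcsin_div_sub_arcsin (hcs : c ^ 2 + s ^ 2 = 1) (hs : 0 < s)
    (hx : x ^ 2 < s ^ 2) :
    HasDerivAt (fun y => c * arcsin (y / s) - arcsin (y * c / (s * √(1 - y ^ 2))))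
      (-(c * x ^ 2) / ((1 - x ^ 2) * √(s ^ 2 - x ^ 2))) x := by
  have hx1 : 0 < 1 - x ^ 2 := by nlinarith
  have hr : 0 < √(s ^ 2 - x ^ 2) := Real.sqrt_pos.2 (by linarith)
  refine (((hasDerivAt_arcsin_div_const hs hx).const_mul c).sub
    (hasDerivAt_arcsin_mul_div_mul_sqrt_one_sub_sq hcs hs hx)).congr_deriv ?_
  field_simp
  ring

end

lemma G_derivative_formula_eq {α x : ℝ} (hs : 0 < sin α) (hx : x ^ 2 < sin α ^ 2) :
    -(x ^ 2 * sin (2 * α) * √(1 - x ^ 2 / sin α ^ 2)) /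
        ((x ^ 2 - 1) * (cos (2 * α) + 2 * x ^ 2 - 1)) =
      -(cos α * x ^ 2) / ((1 - x ^ 2) * √(sin α ^ 2 - x ^ 2)) := by
  have hcos : cos (2 * α) + 2 * x ^ 2 - 1 = -2 * (sin α ^ 2 - x ^ 2) := by
    rw [cos_two_mul, cos_sq']
    ring
  rw [← div_pow, sqrt_one_sub_div_sq hs, sin_two_mul, hcos]
  have hr : 0 < √(sin α ^ 2 - x ^ 2) := Real.sqrt_pos.2 (by linarith)
  have hx1 : 1 - x ^ 2 ≠ 0 := by nlinarith [sin_le_one α]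
  have hx1' : x ^ 2 - 1 ≠ 0 := by nlinarith [sin_le_one α]
  set r := √(sin α ^ 2 - x ^ 2) with hr_def
  rw [← Real.sq_sqrt (sub_nonneg.2 hx.le), ← hr_def]
  field_simp
  ring

/-- The function `G(x) = δτ̂(x,0)` is differentiable on `(0, sin α)` with the explicit
strictly negative derivative given in Appendix D of the paper. -/
theorem G_hasDerivAt (α : ℝ) (hα₀ : 0 < α) (hα₁ : α < π / 2)
    (x : ℝ) (hx : x ∈ Set.Ioo 0 (Real.sin α)) :
    HasDerivAt
      (fun x : ℝ =>
        Real.cos α * arcsin (x / Real.sin α) -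
          arcsin (x * Real.cos α / (Real.sin α * Real.sqrt (1 - x ^ 2))))
      (-(x ^ 2 * Real.sin (2 * α) * Real.sqrt (1 - x ^ 2 / Real.sin α ^ 2)) /
        ((x ^ 2 - 1) * (Real.cos (2 * α) + 2 * x ^ 2 - 1))) x ∧
    -(x ^ 2 * Real.sin (2 * α) * Real.sqrt (1 - x ^ 2 / Real.sin α ^ 2)) /
        ((x ^ 2 - 1) * (Real.cos (2 * α) + 2 * x ^ 2 - 1)) < 0 := by
  obtain ⟨hx₀, hxs⟩ := hx
  have hs : 0 < sin α := sin_pos_of_pos_of_lt_pi hα₀ (by linarith [pi_pos])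
  have hc : 0 < cos α := cos_pos_of_mem_Ioo ⟨by linarith, hα₁⟩
  have hx2 : x ^ 2 < sin α ^ 2 := by nlinarith
  rw [G_derivative_formula_eq hs hx2]
  refine ⟨hasDerivAt_mul_arcsin_div_sub_arcsin (cos_sq_add_sin_sq α) hs hx2, ?_⟩
  have hx1 : 0 < 1 - x ^ 2 := by nlinarith [sin_le_one α]
  have hr : 0 < √(sin α ^ 2 - x ^ 2) := Real.sqrt_pos.2 (by linarith)
  exact div_neg_of_neg_of_pos (by nlinarith [mul_pos hc (pow_pos hx₀ 2)]) (by positivity)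
end

section
/- Let a > 0, let b be real with |b| ≤ a, let u > 0, and let φ be real with 0 < φ ≤ 1/a. Then ( arcsin(a·φ) − arcsin(b·φ) ) / ( 2·arctan(u·φ) ) ≤ arccos(b/a) / ( 2·arctan(u/a) ). (This monotonicity in φ of the switching-number count n_I(φ) is the key step in Proposition 14's refined upper bound n_I ≤ arccos(r⁻_x/r⁺_x)/(2·arctan(u_max/|r⁺_x|)) + 1 on the number of switchings of a globally time-optimal bang-bang solution.) -/
/-!
With `s = aφ ∈ (0, 1]`, `c = b / a ∈ [-1, 1]` and `v = u / a > 0` the claim reads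
`(arcsin s - arcsin (c s)) / (2 arctan (s v)) ≤ arccos c / (2 arctan v)`.
Both the numerator and the denominator are compared with their values at `s = 1`, scaled by `s`:
`arcsin s - arcsin (c s) ≤ s arccos c`, because `t ↦ s arcsin t - arcsin (s t)` is monotone on
`[-1, 1]` and `arccos c = arcsin 1 - arcsin c`; and `s arctan v ≤ arctan (s v)` by the same
argument for `t ↦ arctan (s t) - s arctan t`. The factors `s` then cancel.
-/

open Real Set

namespace Real

theorem monotoneOn_mul_arcsin_sub_arcsin_mul {s : ℝ} (hs₀ : 0 ≤ s) (hs₁ : s ≤ 1) :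
    MonotoneOn (fun t => s * arcsin t - arcsin (s * t)) (Icc (-1) 1) := by
  refine monotoneOn_of_hasDerivWithinAt_nonneg (convex_Icc _ _)
    (f' := fun t => s / √(1 - t ^ 2) - s / √(1 - (s * t) ^ 2)) (by fun_prop) ?_ ?_
  all_goals rw [interior_Icc]; rintro t ⟨ht₀, ht₁⟩
  · have hst : |s * t| < 1 := by
      rw [abs_mul, abs_of_nonneg hs₀]
      exact (mul_le_of_le_one_left (abs_nonneg t) hs₁).trans_lt (abs_lt.2 ⟨ht₀, ht₁⟩)
    obtain ⟨hst₀, hst₁⟩ := abs_lt.1 hst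
    have h_inner := (hasDerivAt_arcsin hst₀.ne' hst₁.ne).comp t ((hasDerivAt_id t).const_mul s)
    have h_outer := (hasDerivAt_arcsin ht₀.ne' ht₁.ne).const_mul s
    exact ((h_outer.sub h_inner).congr_deriv (by simp; ring)).hasDerivWithinAt
  · have h_pos : 0 < √(1 - t ^ 2) := sqrt_pos.2 (by nlinarith)
    have h_le : √(1 - t ^ 2) ≤ √(1 - (s * t) ^ 2) :=
      sqrt_le_sqrt (by nlinarith [mul_le_one₀ hs₁ hs₀ hs₁, sq_nonneg t])
    simp only [sub_nonneg]
    exact div_le_div_of_nonneg_left hs₀ h_pos h_le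

theorem arcsin_sub_arcsin_mul_le {s c : ℝ} (hs₀ : 0 ≤ s) (hs₁ : s ≤ 1) (hc₀ : -1 ≤ c)
    (hc₁ : c ≤ 1) : arcsin s - arcsin (c * s) ≤ s * arccos c := by
  have h := monotoneOn_mul_arcsin_sub_arcsin_mul hs₀ hs₁ ⟨hc₀, hc₁⟩ (by norm_num) hc₁
  simp only [mul_one, arcsin_one] at h
  rw [arccos_eq_pi_div_two_sub_arcsin, mul_comm c]
  linarith

theorem monotone_arctan_mul_sub_mul_arctan {s : ℝ} (hs₀ : 0 ≤ s) (hs₁ : s ≤ 1) :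
    Monotone (fun t => arctan (s * t) - s * arctan t) := by
  refine monotone_of_hasDerivAt_nonneg
    (f' := fun t => s / (1 + (s * t) ^ 2) - s / (1 + t ^ 2)) (fun t => ?_) (fun t => ?_)
  · exact ((((hasDerivAt_id t).const_mul s).arctan).sub
      ((hasDerivAt_arctan t).const_mul s)).congr_deriv (by simp; ring)
  · have h_le : 1 + (s * t) ^ 2 ≤ 1 + t ^ 2 := by
      nlinarith [mul_le_one₀ hs₁ hs₀ hs₁, sq_nonneg t]
    simp only [Pi.zero_apply, sub_nonneg]
    exact div_le_div_of_nonneg_left hs₀ (by positivity) h_le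

theorem mul_arctan_le_arctan_mul {s v : ℝ} (hs₀ : 0 ≤ s) (hs₁ : s ≤ 1) (hv : 0 ≤ v) :
    s * arctan v ≤ arctan (s * v) := by
  have h := monotone_arctan_mul_sub_mul_arctan hs₀ hs₁ hv
  simp only [mul_zero, arctan_zero, sub_zero] at h
  linarith

theorem arcsin_sub_arcsin_mul_div_le {s c v : ℝ} (hs₀ : 0 < s) (hs₁ : s ≤ 1) (hc₀ : -1 ≤ c)
    (hc₁ : c ≤ 1) (hv : 0 < v) :
    (arcsin s - arcsin (c * s)) / (2 * arctan (s * v)) ≤ arccos c / (2 * arctan v) := by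
  have h_arctan : 0 < arctan v := by simpa using arctan_strictMono hv
  calc (arcsin s - arcsin (c * s)) / (2 * arctan (s * v))
      ≤ s * arccos c / (2 * (s * arctan v)) :=
        div_le_div₀ (mul_nonneg hs₀.le (arccos_nonneg c))
          (arcsin_sub_arcsin_mul_le hs₀.le hs₁ hc₀ hc₁) (by positivity)
          (by linarith [mul_arctan_le_arctan_mul hs₀.le hs₁ hv.le])
    _ = arccos c / (2 * arctan v) := by field_simp

end Real

/-- Monotonicity in `φ` of the switching-number count `n_I(φ)` (Appendix H), key step in
Proposition 14's refined upper bound on the number of switchings. -/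
theorem corner_count_monotone (a b u φ : ℝ) (ha : 0 < a) (hb : |b| ≤ a) (hu : 0 < u)
    (hφ₀ : 0 < φ) (hφ₁ : φ ≤ 1 / a) :
    (arcsin (a * φ) - arcsin (b * φ)) / (2 * arctan (u * φ)) ≤
      arccos (b / a) / (2 * arctan (u / a)) := by
  obtain ⟨hb₀, hb₁⟩ := abs_le.1 hb
  have hs₁ : a * φ ≤ 1 := by rwa [le_div_iff₀ ha, mul_comm] at hφ₁
  have hc₀ : -1 ≤ b / a := by rwa [le_div_iff₀ ha, neg_one_mul]
  have hc₁ : b / a ≤ 1 := by rwa [div_le_one ha]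
  have h := arcsin_sub_arcsin_mul_div_le (mul_pos ha hφ₀) hs₁ hc₀ hc₁ (div_pos hu ha)
  have hbφ : b / a * (a * φ) = b * φ := by field_simp
  have huφ : a * φ * (u / a) = u * φ := by field_simp
  rwa [hbφ, huφ] at h
end
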